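/- Let C = {1,2}, σ² > 0, b > 0, a ≥ 0, s ∈ ℝ. Then the pairwise time-lag exponential (LExp) kernel K((t,l),(t',l')) := (σ² / (𝟙{l ≠ l'}·a² + 1)) · exp( −b |t − t' − 𝟙{l ≠ l'}·s| ), where 𝟙{l ≠ l'} equals 1 if l ≠ l' and 0 otherwise, is a positive semidefinite kernel on ℝ × C. -/

import Mathlib

/-! The LExp kernel `K` is not symmetric, but only its symmetrisation `K p q + K q p` enters the
quadratic form. With `w = σ²/(a²+1)` and the Laplace kernel `E t t' = exp (-b|t - t'|)`, this
symmetrisation is `w E(u p, u q) + w E(v p, v q) + 2(σ² - w) 𝟙{l = l'} E(t, t')`, where `u` and `v`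
shift the times of the second channel by `-s` and `+s`. Each summand is a nonnegative multiple of a
reparametrisation or a block-diagonal restriction of `E`, and `E` is positive semidefinite because
`E t t' = e^{-bt} min(e^{2bt}, e^{2bt'}) e^{-bt'}`, with `min` the covariance of Brownian motion. -/

def IsPSDKernel {X : Type*} (K : X → X → ℝ) : Prop :=
  ∀ (n : ℕ) (x : Fin n → X) (c : Fin n → ℝ),
    0 ≤ ∑ i, ∑ j, c i * c j * K (x i) (x j)

open Real MeasureTheory
open scoped NNReal InnerProductSpace

namespace IsPSDKernel

variable {X Y ι : Type*} {K L : X → X → ℝ}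

theorem of_inner {E : Type*} [NormedAddCommGroup E] [InnerProductSpace ℝ E] (φ : X → E) :
    IsPSDKernel fun x y => ⟪φ x, φ y⟫_ℝ := by
  intro n x c
  have hgram : ∑ i, ∑ j, c i * c j * ⟪φ (x i), φ (x j)⟫_ℝ =
      ⟪∑ i, c i • φ (x i), ∑ j, c j • φ (x j)⟫_ℝ := by
    simp_rw [sum_inner, real_inner_smul_left, inner_sum, real_inner_smul_right, Finset.mul_sum,
      mul_assoc]
  exact hgram ▸ real_inner_self_nonneg

theorem comp {K : Y → Y → ℝ} (hK : IsPSDKernel K) (f : X → Y) :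
    IsPSDKernel fun x y => K (f x) (f y) :=
  fun n x c => hK n (f ∘ x) c

theorem mul_mul (hK : IsPSDKernel K) (g : X → ℝ) : IsPSDKernel fun x y => g x * K x y * g y := by
  intro n x c
  refine (hK n x fun i => c i * g (x i)).trans_eq
    (Finset.sum_congr rfl fun i _ => Finset.sum_congr rfl fun j _ => ?_)
  ring

theorem add (hK : IsPSDKernel K) (hL : IsPSDKernel L) : IsPSDKernel fun x y => K x y + L x y := by
  intro n x c
  simpa only [mul_add, Finset.sum_add_distrib] using add_nonneg (hK n x c) (hL n x c)

theorem const_mul {r : ℝ} (hr : 0 ≤ r) (hK : IsPSDKernel K) : IsPSDKernel fun x y => r * K x y := by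
  intro n x c
  refine (mul_nonneg hr (hK n x c)).trans_eq ?_
  simp only [Finset.mul_sum]
  exact Finset.sum_congr rfl fun i _ => Finset.sum_congr rfl fun j _ => by ring

theorem of_add_swap (h : IsPSDKernel fun x y => K x y + K y x) : IsPSDKernel K := by
  intro n x c
  have hsym : ∑ i, ∑ j, c i * c j * (K (x i) (x j) + K (x j) (x i)) =
      2 * ∑ i, ∑ j, c i * c j * K (x i) (x j) := by
    have hswap : ∑ i, ∑ j, c i * c j * K (x j) (x i) = ∑ i, ∑ j, c i * c j * K (x i) (x j) := by
      rw [Finset.sum_comm]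
      exact Finset.sum_congr rfl fun i _ => Finset.sum_congr rfl fun j _ => by ring
    simp only [mul_add, Finset.sum_add_distrib, hswap]
    ring
  linarith [h n x c]

theorem ite_eq [Fintype ι] [DecidableEq ι] (hK : IsPSDKernel K) (f : X → ι) :
    IsPSDKernel fun x y => if f x = f y then K x y else 0 := by
  intro n x c
  have hblock : ∑ i, ∑ j, c i * c j * (if f (x i) = f (x j) then K (x i) (x j) else 0) =
      ∑ l, ∑ i, ∑ j, (if f (x i) = l then c i else 0) * (if f (x j) = l then c j else 0) *
        K (x i) (x j) := by
    symm
    rw [Finset.sum_comm]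
    refine Finset.sum_congr rfl fun i _ => ?_
    rw [Finset.sum_comm]
    refine Finset.sum_congr rfl fun j _ => ?_
    by_cases hij : f (x i) = f (x j) <;> simp [hij, ite_mul, mul_ite]
  exact hblock ▸ Finset.sum_nonneg fun l _ => hK n x _

end IsPSDKernel

/-- `min p q` is the `L²` inner product of the indicators of `(0, p]` and `(0, q]`. -/
theorem isPSDKernel_min : IsPSDKernel fun p q : ℝ≥0 => min (p : ℝ) q := by
  let φ (p : ℝ≥0) : Lp ℝ 2 (volume : Measure ℝ) :=
    indicatorConstLp 2 (measurableSet_Ioc (a := 0) (b := (p : ℝ))) measure_Ioc_lt_top.ne 1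
  have hgram (p q : ℝ≥0) : ⟪φ p, φ q⟫_ℝ = min (p : ℝ) q := by
    rw [L2.real_inner_indicatorConstLp_one_indicatorConstLp_one _ _ measure_Ioc_lt_top.ne
      measure_Ioc_lt_top.ne, Set.Ioc_inter_Ioc, max_self,
      volume_real_Ioc_of_le (by positivity), sub_zero]
  simpa only [hgram] using IsPSDKernel.of_inner φ

theorem exp_neg_mul_abs_sub_eq {b : ℝ} (hb : 0 ≤ b) (t u : ℝ) :
    exp (-b * |t - u|) = exp (-b * t) * min (exp (2 * b * t)) (exp (2 * b * u)) * exp (-b * u) := by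
  rcases le_total t u with htu | hut
  · rw [min_eq_left (exp_le_exp.2 (by nlinarith)), abs_of_nonpos (by linarith), ← exp_add,
      ← exp_add]
    ring_nf
  · rw [min_eq_right (exp_le_exp.2 (by nlinarith)), abs_of_nonneg (by linarith), ← exp_add,
      ← exp_add]
    ring_nf

theorem isPSDKernel_exp_neg_mul_abs_sub {b : ℝ} (hb : 0 ≤ b) :
    IsPSDKernel fun t u : ℝ => exp (-b * |t - u|) := by
  have h := (isPSDKernel_min.comp fun t => (⟨exp (2 * b * t), (exp_pos _).le⟩ : ℝ≥0)).mul_mul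
      fun t => exp (-b * t)
  convert h using 1
  funext t u
  exact exp_neg_mul_abs_sub_eq hb t u

noncomputable def lexpKernel (σ2 b a s : ℝ) (p q : ℝ × Fin 2) : ℝ :=
  σ2 / ((if p.2 ≠ q.2 then (1 : ℝ) else 0) * a ^ 2 + 1) *
    Real.exp (-b * |p.1 - q.1 - (if p.2 ≠ q.2 then (1 : ℝ) else 0) * s|)

def lagShift (r : ℝ) (p : ℝ × Fin 2) : ℝ :=
  p.1 + if p.2 = 1 then r else 0

theorem lexpKernel_add_swap (σ2 b a s : ℝ) (p q : ℝ × Fin 2) :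
    lexpKernel σ2 b a s p q + lexpKernel σ2 b a s q p =
      σ2 / (a ^ 2 + 1) * exp (-b * |lagShift (-s) p - lagShift (-s) q|) +
        σ2 / (a ^ 2 + 1) * exp (-b * |lagShift s p - lagShift s q|) +
        2 * (σ2 * a ^ 2 / (a ^ 2 + 1)) * (if p.2 = q.2 then exp (-b * |p.1 - q.1|) else 0) := by
  obtain ⟨t, l⟩ := p
  obtain ⟨t', l'⟩ := q
  fin_cases l <;> fin_cases l' <;> simp only [lexpKernel, lagShift,
    Fin.zero_eta, Fin.mk_one, Fin.isValue, ne_eq, zero_ne_one, one_ne_zero, not_true_eq_false,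
    not_false_eq_true, ↓reduceIte, zero_mul, one_mul, mul_zero, zero_add, add_zero, sub_zero,
    div_one, neg_mul, add_sub_add_right_eq_sub]
  · rw [abs_sub_comm t' t]
    field_simp
    ring
  · rw [← abs_neg (t' - t - s)]
    ring_nf
  · rw [← abs_neg (t' - t - s)]
    ring_nf
  · rw [abs_sub_comm t' t]
    field_simp
    ring

theorem gplag_LExp_psd_general (σ2 b a s : ℝ) (hσ2 : 0 < σ2) (hb : 0 < b) :
    IsPSDKernel (fun p q : ℝ × Fin 2 =>
      σ2 / ((if p.2 ≠ q.2 then (1 : ℝ) else 0) * a ^ 2 + 1) *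
        Real.exp (-b * |p.1 - q.1 - (if p.2 ≠ q.2 then (1 : ℝ) else 0) * s|)) := by
  have hE := isPSDKernel_exp_neg_mul_abs_sub hb.le
  have hw : 0 ≤ σ2 / (a ^ 2 + 1) := by positivity
  have hw' : 0 ≤ 2 * (σ2 * a ^ 2 / (a ^ 2 + 1)) := by positivity
  refine IsPSDKernel.of_add_swap (K := lexpKernel σ2 b a s) ?_
  simp only [lexpKernel_add_swap]
  exact (((hE.comp (lagShift (-s))).const_mul hw).add ((hE.comp (lagShift s)).const_mul hw)).add
    (((hE.comp Prod.fst).ite_eq Prod.snd).const_mul hw')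

/-- The pairwise time-lag exponential (LExp) kernel
`K((t,l),(t',l')) = σ²/(𝟙{l≠l'}a²+1) · exp(-b|t-t'-𝟙{l≠l'}s|)`
is a positive semidefinite kernel on `ℝ × {1,2}`. -/
theorem gplag_LExp_psd (σ2 b a s : ℝ) (hσ2 : 0 < σ2) (hb : 0 < b) (ha : 0 ≤ a) :
    IsPSDKernel (fun p q : ℝ × Fin 2 =>
      σ2 / ((if p.2 ≠ q.2 then (1 : ℝ) else 0) * a ^ 2 + 1) *
        Real.exp (-b * |p.1 - q.1 - (if p.2 ≠ q.2 then (1 : ℝ) else 0) * s|)) :=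
  gplag_LExp_psd_general σ2 b a s hσ2 hb
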